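/- Let d ≥ 2 be an integer and consider the d×d grid graph with vertex set {1,…,d}×{1,…,d}, edges between horizontal and vertical neighbors. Let A, B, C partition the vertices such that no vertex of A is adjacent to a vertex of B. If the bottom row (the d 'special boundary vertices') contains a vertices of A and b vertices of B with a, b ≥ 1, then |C| ≥ min{a, b}. -/
import Mathlib


/-- Adjacency in the `d × d` grid graph: horizontal or vertical neighbors. -/
def gridAdj (d : ℕ) (p q : Fin d × Fin d) : Prop :=
  (p.1 = q.1 ∧ (p.2.val + 1 = q.2.val ∨ q.2.val + 1 = p.2.val)) ∨
  (p.2 = q.2 ∧ (p.1.val + 1 = q.1.val ∨ q.1.val + 1 = p.1.val))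

lemma gridAdj_symm {d : ℕ} {p q : Fin d × Fin d} (h : gridAdj d p q) : gridAdj d q p := by
  unfold gridAdj at *; tauto

/-- Along a path starting in `A` and ending outside `A`, some vertex lies in `C`. -/
lemma first_exit {d : ℕ} {A B C : Finset (Fin d × Fin d)}
    (hC : ∀ p, p ∉ A → p ∉ B → p ∈ C)
    (hAB : ∀ p ∈ A, ∀ q ∈ B, ¬ gridAdj d p q)
    (f : ℕ → Fin d × Fin d) (n : ℕ)
    (hadj : ∀ k, k < n → gridAdj d (f k) (f (k+1)))
    (h0 : f 0 ∈ A) (hn : f n ∉ A) :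
    ∃ k ≤ n, f k ∈ C := by
  classical
  set S := (Finset.range (n+1)).filter (fun k => f k ∉ A) with hSdef
  have hS : S.Nonempty := ⟨n, by simp [hSdef, Nat.lt_succ_iff, hn]⟩
  set m := S.min' hS with hm
  have hmS : m ∈ S := S.min'_mem hS
  simp only [hSdef, Finset.mem_filter, Finset.mem_range, Nat.lt_succ_iff] at hmS
  obtain ⟨hmn, hmA⟩ := hmS
  have hm0 : m ≠ 0 := by intro h; rw [h] at hmA; exact hmA h0
  have hprev : f (m-1) ∈ A := by
    by_contra h
    have hle : m ≤ m - 1 := S.min'_le _ (by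
      simp only [hSdef, Finset.mem_filter, Finset.mem_range, Nat.lt_succ_iff]
      exact ⟨le_trans (Nat.sub_le _ _) hmn, h⟩)
    omega
  have hadjm : gridAdj d (f (m-1)) (f m) := by
    have h := hadj (m-1) (by omega)
    rwa [Nat.sub_add_cancel (Nat.one_le_iff_ne_zero.2 hm0)] at h
  have hnB : f m ∉ B := fun hB => hAB _ hprev _ hB hadjm
  exact ⟨m, hmn, hC _ hmA hnB⟩

/-- If every element of `s` (all in the bottom row) has a `C` vertex in its column,
then `|s| ≤ |C|`. -/
lemma count_by_col {d : ℕ} (s C : Finset (Fin d × Fin d))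
    (hs : ∀ p ∈ s, p.2.val = 0)
    (h : ∀ p ∈ s, ∃ c ∈ C, c.1 = p.1) : s.card ≤ C.card := by
  classical
  apply Finset.card_le_card_of_injOn
    (fun p => if hp : ∃ c, c ∈ C ∧ c.1 = p.1 then hp.choose else p)
  · intro p hp
    have hex : ∃ c, c ∈ C ∧ c.1 = p.1 := by
      obtain ⟨c, hc1, hc2⟩ := h p hp; exact ⟨c, hc1, hc2⟩
    simp only [dif_pos hex]
    exact hex.choose_spec.1
  · intro p hp q hq heq
    have hexp : ∃ c, c ∈ C ∧ c.1 = p.1 := by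
      obtain ⟨c, hc1, hc2⟩ := h p hp; exact ⟨c, hc1, hc2⟩
    have hexq : ∃ c, c ∈ C ∧ c.1 = q.1 := by
      obtain ⟨c, hc1, hc2⟩ := h q hq; exact ⟨c, hc1, hc2⟩
    simp only [dif_pos hexp, dif_pos hexq] at heq
    have h1 : p.1 = q.1 := by
      rw [← hexp.choose_spec.2, ← hexq.choose_spec.2, heq]
    have h2 : p.2 = q.2 := Fin.ext (by rw [hs p hp, hs q hq])
    exact Prod.ext h1 h2

/-- If every row contains a `C` vertex, then `d ≤ |C|`. -/
lemma count_by_row {d : ℕ} (C : Finset (Fin d × Fin d))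
    (h : ∀ j : Fin d, ∃ c ∈ C, c.2 = j) : d ≤ C.card := by
  classical
  have := Finset.card_le_card_of_injOn
    (fun j : Fin d => if hj : ∃ c, c ∈ C ∧ c.2 = j then hj.choose else (j, j))
    (s := Finset.univ) (t := C) ?_ ?_
  · simpa using this
  · intro j _
    have hex : ∃ c, c ∈ C ∧ c.2 = j := by obtain ⟨c, hc1, hc2⟩ := h j; exact ⟨c, hc1, hc2⟩
    simp only [dif_pos hex]
    exact hex.choose_spec.1
  · intro j _ k _ heq
    have hexj : ∃ c, c ∈ C ∧ c.2 = j := by obtain ⟨c, hc1, hc2⟩ := h j; exact ⟨c, hc1, hc2⟩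
    have hexk : ∃ c, c ∈ C ∧ c.2 = k := by obtain ⟨c, hc1, hc2⟩ := h k; exact ⟨c, hc1, hc2⟩
    simp only [dif_pos hexj, dif_pos hexk] at heq
    rw [← hexj.choose_spec.2, ← hexk.choose_spec.2, heq]

/-- In a `d × d` grid graph whose vertices are partitioned into `A`, `B`, `C`
with no `A`–`B` adjacency, if the bottom row contains `a ≥ 1` vertices of `A`
and `b ≥ 1` vertices of `B`, then `|C| ≥ min a b`. -/
theorem grid_separator (d : ℕ) (hd : 2 ≤ d)
    (A B C : Finset (Fin d × Fin d))
    (hpart : ∀ p : Fin d × Fin d,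
      (p ∈ A ∧ p ∉ B ∧ p ∉ C) ∨ (p ∉ A ∧ p ∈ B ∧ p ∉ C) ∨
      (p ∉ A ∧ p ∉ B ∧ p ∈ C))
    (hAB : ∀ p ∈ A, ∀ q ∈ B, ¬ gridAdj d p q)
    (a b : ℕ)
    (ha : a = (A.filter (fun p => p.2.val = 0)).card)
    (hb : b = (B.filter (fun p => p.2.val = 0)).card)
    (ha1 : 1 ≤ a) (hb1 : 1 ≤ b) :
    min a b ≤ C.card := by
  classical
  have hd0 : 0 < d := by omega
  have hC : ∀ p, p ∉ A → p ∉ B → p ∈ C := by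
    intro p h1 h2; rcases hpart p with h|h|h <;> tauto
  have hC' : ∀ p, p ∉ B → p ∉ A → p ∈ C := fun p h1 h2 => hC p h2 h1
  have hBA : ∀ p ∈ B, ∀ q ∈ A, ¬ gridAdj d p q :=
    fun p hp q hq h => hAB q hq p hp (gridAdj_symm h)
  have hdisj : ∀ p, p ∈ A → p ∉ B := by
    intro p h1 h2; rcases hpart p with h|h|h <;> tauto
  -- a column from a vertex p with p ∉ X at some height yields a C vertex in that column
  have colC : ∀ (X Y : Finset (Fin d × Fin d)),
      (∀ p, p ∉ X → p ∉ Y → p ∈ C) →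
      (∀ p ∈ X, ∀ q ∈ Y, ¬ gridAdj d p q) →
      ∀ i : Fin d, (i, (⟨0, hd0⟩ : Fin d)) ∈ X → ∀ j : Fin d, (i, j) ∉ X →
      ∃ c ∈ C, c.1 = i := by
    intro X Y hCX hXY i h0 j hj
    have hjlt : j.val < d := j.isLt
    obtain ⟨k, hk, hkC⟩ := first_exit hCX hXY
      (fun k => (i, ⟨k % d, Nat.mod_lt _ hd0⟩)) j.val
      (by
        intro k hk
        left
        refine ⟨rfl, Or.inl ?_⟩
        simp only
        rw [Nat.mod_eq_of_lt (by omega), Nat.mod_eq_of_lt (by omega)])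
      (by simpa using h0)
      (by
        have hje : (⟨j.val % d, Nat.mod_lt _ hd0⟩ : Fin d) = j :=
          Fin.ext (Nat.mod_eq_of_lt hjlt)
        simpa [hje] using hj)
    exact ⟨_, hkC, rfl⟩
  by_cases h1 : ∃ i : Fin d, (i, (⟨0, hd0⟩ : Fin d)) ∈ A ∧ ∀ j : Fin d, (i, j) ∈ A
  · by_cases h2 : ∃ i : Fin d, (i, (⟨0, hd0⟩ : Fin d)) ∈ B ∧ ∀ j : Fin d, (i, j) ∈ B
    · -- an all-A column and an all-B column: every row has a C vertex, so d ≤ |C|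
      obtain ⟨i, -, hiA⟩ := h1
      obtain ⟨i', -, hiB⟩ := h2
      have hne : i.val ≠ i'.val := by
        intro h
        have : i = i' := Fin.ext h
        exact hdisj _ (hiA ⟨0, hd0⟩) (this ▸ hiB ⟨0, hd0⟩)
      have hrow : ∀ j : Fin d, ∃ c ∈ C, c.2 = j := by
        intro j
        rcases lt_or_gt_of_ne hne with hlt | hgt
        · obtain ⟨k, hk, hkC⟩ := first_exit hC hAB
            (fun k => (⟨(i.val + k) % d, Nat.mod_lt _ hd0⟩, j)) (i'.val - i.val)
            (by
              intro k hk
              right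
              refine ⟨rfl, Or.inl ?_⟩
              simp only
              rw [Nat.mod_eq_of_lt (by omega), Nat.mod_eq_of_lt (by omega)]
              omega)
            (by
              have he : (⟨(i.val + 0) % d, Nat.mod_lt _ hd0⟩ : Fin d) = i :=
                Fin.ext (by simp [Nat.mod_eq_of_lt i.isLt])
              show ((⟨(i.val + 0) % d, Nat.mod_lt _ hd0⟩ : Fin d), j) ∈ A
              rw [he]; exact hiA j)
            (by
              have he : (⟨(i.val + (i'.val - i.val)) % d, Nat.mod_lt _ hd0⟩ : Fin d) = i' :=
                Fin.ext (by
                  have : i.val + (i'.val - i.val) = i'.val := by omega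
                  simp [this, Nat.mod_eq_of_lt i'.isLt])
              show ((⟨(i.val + (i'.val - i.val)) % d, Nat.mod_lt _ hd0⟩ : Fin d), j) ∉ A
              rw [he]
              exact fun h => hdisj _ h (hiB j))
          exact ⟨_, hkC, rfl⟩
        · obtain ⟨k, hk, hkC⟩ := first_exit hC' hBA
            (fun k => (⟨(i'.val + k) % d, Nat.mod_lt _ hd0⟩, j)) (i.val - i'.val)
            (by
              intro k hk
              right
              refine ⟨rfl, Or.inl ?_⟩
              simp only
              rw [Nat.mod_eq_of_lt (by omega), Nat.mod_eq_of_lt (by omega)]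
              omega)
            (by
              have he : (⟨(i'.val + 0) % d, Nat.mod_lt _ hd0⟩ : Fin d) = i' :=
                Fin.ext (by simp [Nat.mod_eq_of_lt i'.isLt])
              show ((⟨(i'.val + 0) % d, Nat.mod_lt _ hd0⟩ : Fin d), j) ∈ B
              rw [he]; exact hiB j)
            (by
              have he : (⟨(i'.val + (i.val - i'.val)) % d, Nat.mod_lt _ hd0⟩ : Fin d) = i :=
                Fin.ext (by
                  have : i'.val + (i.val - i'.val) = i.val := by omega
                  simp [this, Nat.mod_eq_of_lt i.isLt])
              show ((⟨(i'.val + (i.val - i'.val)) % d, Nat.mod_lt _ hd0⟩ : Fin d), j) ∉ B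
              rw [he]
              exact fun h => hdisj _ (hiA j) h)
          exact ⟨_, hkC, rfl⟩
      have hdC : d ≤ C.card := count_by_row C hrow
      have had : a ≤ d := by
        rw [ha]
        calc (A.filter (fun p => p.2.val = 0)).card
            ≤ (Finset.univ : Finset (Fin d)).card := by
              apply Finset.card_le_card_of_injOn (fun p => p.1)
                (fun _ _ => Finset.mem_univ _)
              intro p hp q hq heq
              simp only [Finset.mem_coe, Finset.mem_filter] at hp hq
              exact Prod.ext heq (Fin.ext (by rw [hp.2, hq.2]))
          _ = d := by simp
      exact le_trans (le_trans (min_le_left a b) had) hdC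
    · -- every all-B-bottom column has a non-B vertex: b ≤ |C|
      push_neg at h2
      have hbC : b ≤ C.card := by
        rw [hb]
        apply count_by_col _ C (fun p hp => (Finset.mem_filter.1 hp).2)
        intro p hp
        obtain ⟨hpB, hp0⟩ := Finset.mem_filter.1 hp
        have hpe : p = (p.1, (⟨0, hd0⟩ : Fin d)) := Prod.ext rfl (Fin.ext hp0)
        obtain ⟨j, hj⟩ := h2 p.1 (hpe ▸ hpB)
        exact colC B A hC' hBA p.1 (hpe ▸ hpB) j hj
      exact le_trans (min_le_right a b) hbC
  · -- every all-A-bottom column has a non-A vertex: a ≤ |C|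
    push_neg at h1
    have haC : a ≤ C.card := by
      rw [ha]
      apply count_by_col _ C (fun p hp => (Finset.mem_filter.1 hp).2)
      intro p hp
      obtain ⟨hpA, hp0⟩ := Finset.mem_filter.1 hp
      have hpe : p = (p.1, (⟨0, hd0⟩ : Fin d)) := Prod.ext rfl (Fin.ext hp0)
      obtain ⟨j, hj⟩ := h1 p.1 (hpe ▸ hpA)
      exact colC A B hC hAB p.1 (hpe ▸ hpA) j hj
    exact le_trans (min_le_left a b) haC
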